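/- arXiv:1501.03640 — 2 statements merged into one kernel-verified Lean document; each statement's English description precedes it below -/
import Mathlib

section
/- Let E = {n_1, n_2, ...} be an infinite subset of ℕ with n_k < n_{k+1}, and let μ be a scaling function. Then p̄_μ(E) = 0 if and only if lim_{k→∞} μ(n_{k+1})/μ(n_k) = 1. -/
/-!
The relative hole sizes `lamMu μ E n / μ n` lie in `[0, 1]`, so their limsup vanishes exactly
when they tend to `0`. For `E = range nseq`, the consecutive pair `nseq k < nseq (k+1)` is a hole,
so `1 - μ (nseq (k+1)) / μ (nseq k)` is at most the relative hole size at `nseq k`. Conversely,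
every hole `(a, b)` with `a ≥ nseq K` lies inside a consecutive pair
`nseq j ≤ a < b ≤ nseq (j+1)` with `j ≥ K`, so if `c * μ (nseq j) ≤ μ (nseq (j+1))` for all
`j ≥ K`, then `μ a - μ b ≤ (1 - c) * μ a`.
-/

open Filter Topology

/-- `lamMu μ E n`: the analogue of the largest-hole length at infinity, i.e. the supremum
of `μ a - μ b` over `n ≤ a < b` such that no element of `E` lies strictly between `a` and `b`. -/
noncomputable def lamMu (μ : ℕ → ℝ) (E : Set ℕ) (n : ℕ) : ℝ :=
  sSup {d : ℝ | ∃ a b : ℕ, n ≤ a ∧ a < b ∧ (∀ m : ℕ, a < m → m < b → m ∉ E) ∧ d = μ a - μ b}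

/-- The upper porosity of `E` at infinity w.r.t. the scaling function `μ`. -/
noncomputable def upperPorosityInf (μ : ℕ → ℝ) (E : Set ℕ) : ℝ :=
  Filter.limsup (fun n => lamMu μ E n / μ n) Filter.atTop

/-- The lower porosity of `E` at infinity w.r.t. the scaling function `μ`. -/
noncomputable def lowerPorosityInf (μ : ℕ → ℝ) (E : Set ℕ) : ℝ :=
  Filter.liminf (fun n => lamMu μ E n / μ n) Filter.atTop

/-- The set of porosity numbers of `E` at infinity w.r.t. `μ`. -/
def porosityNumbersInf (μ : ℕ → ℝ) (E : Set ℕ) : Set ℝ :=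
  {p : ℝ | ∃ n : ℕ → ℕ, StrictMono n ∧
    Tendsto (fun k => lamMu μ E (n k) / μ (n k)) atTop (nhds p)}

lemma limsup_eq_zero_iff_tendsto {α : Type*} {l : Filter α} [l.NeBot] {f : α → ℝ}
    (hf0 : ∀ x, 0 ≤ f x) (hf : IsBoundedUnder (· ≤ ·) l f) :
    limsup f l = 0 ↔ Tendsto f l (𝓝 0) := by
  refine ⟨fun h => ?_, Tendsto.limsup_eq⟩
  have hf' : IsBoundedUnder (· ≥ ·) l f := isBoundedUnder_of ⟨0, hf0⟩
  exact tendsto_of_le_liminf_of_limsup_le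
    (le_liminf_of_le hf.isCoboundedUnder_ge (Eventually.of_forall hf0)) h.le hf hf'

def IsHole (E : Set ℕ) (a b : ℕ) : Prop :=
  ∀ m : ℕ, a < m → m < b → m ∉ E

lemma isHole_range_succ {nseq : ℕ → ℕ} (hmono : StrictMono nseq) (k : ℕ) :
    IsHole (Set.range nseq) (nseq k) (nseq (k + 1)) := by
  rintro _ hlt hgt ⟨j, rfl⟩
  have := hmono.lt_iff_lt.1 hlt
  have := hmono.lt_iff_lt.1 hgt
  omega

section LamMu

variable {μ : ℕ → ℝ} {E : Set ℕ} {n : ℕ}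

lemma le_lamMu (hμ : Antitone μ) (hμ0 : ∀ n, 0 ≤ μ n) {a b : ℕ} (hna : n ≤ a) (hab : a < b)
    (hE : IsHole E a b) : μ a - μ b ≤ lamMu μ E n := by
  refine le_csSup ⟨μ n, ?_⟩ ⟨a, b, hna, hab, hE, rfl⟩
  rintro _ ⟨a', b', hna', -, -, rfl⟩
  linarith [hμ hna', hμ0 b']

lemma lamMu_le_of_forall {C : ℝ}
    (h : ∀ a b, n ≤ a → a < b → IsHole E a b → μ a - μ b ≤ C) : lamMu μ E n ≤ C := by
  refine csSup_le ⟨_, n, n + 1, le_rfl, n.lt_succ_self, fun m h₁ h₂ => by omega, rfl⟩ ?_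
  rintro _ ⟨a, b, hna, hab, hE, rfl⟩
  exact h a b hna hab hE

lemma lamMu_nonneg (hμ : Antitone μ) (hμ0 : ∀ n, 0 ≤ μ n) : 0 ≤ lamMu μ E n :=
  le_trans (sub_nonneg.2 (hμ n.le_succ))
    (le_lamMu hμ hμ0 le_rfl n.lt_succ_self fun m h₁ h₂ => by omega)

lemma lamMu_le_self (hμ : Antitone μ) (hμ0 : ∀ n, 0 ≤ μ n) : lamMu μ E n ≤ μ n :=
  lamMu_le_of_forall fun a b hna _ _ => by linarith [hμ hna, hμ0 b]

end LamMu

section RangeHoles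

variable {μ : ℕ → ℝ} {nseq : ℕ → ℕ}

lemma sub_le_of_isHole_range (hμ : Antitone μ) (hmono : StrictMono nseq) {c : ℝ} (hc : 0 ≤ c)
    {K : ℕ} (hK : ∀ j ≥ K, c * μ (nseq j) ≤ μ (nseq (j + 1))) {a b : ℕ} (ha : nseq K ≤ a)
    (hE : IsHole (Set.range nseq) a b) : μ a - μ b ≤ (1 - c) * μ a := by
  have hshift : StrictMono fun i => nseq (K + i) := hmono.comp (strictMono_id.const_add K)
  obtain ⟨i, hi, hi'⟩ := hshift.exists_between_of_tendsto_atTop hshift.tendsto_atTop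
    (x := a + 1) (by simpa [Nat.lt_succ_iff] using ha)
  rw [← add_assoc] at hi'
  have hb : b ≤ nseq (K + i + 1) := by
    by_contra! hlt
    exact hE _ (by omega) hlt ⟨_, rfl⟩
  calc μ a - μ b ≤ μ a - μ (nseq (K + i + 1)) := by gcongr; exact hμ hb
    _ ≤ μ a - c * μ (nseq (K + i)) := by gcongr; exact hK (K + i) (Nat.le_add_right K i)
    _ ≤ μ a - c * μ a := by gcongr; exact hμ (by omega)
    _ = (1 - c) * μ a := by ring

variable (hμ : StrictAnti μ) (hμpos : ∀ n, 0 < μ n) (hmono : StrictMono nseq)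
include hμ hμpos hmono

lemma one_sub_div_le_lamMu_div (k : ℕ) :
    1 - μ (nseq (k + 1)) / μ (nseq k) ≤ lamMu μ (Set.range nseq) (nseq k) / μ (nseq k) := by
  rw [one_sub_div (hμpos _).ne']
  gcongr
  · exact (hμpos _).le
  exact le_lamMu hμ.antitone (fun n => (hμpos n).le) le_rfl (hmono k.lt_succ_self)
    (isHole_range_succ hmono k)

lemma tendsto_div_of_tendsto_lamMu_div
    (h : Tendsto (fun n => lamMu μ (Set.range nseq) n / μ n) atTop (𝓝 0)) :
    Tendsto (fun k => μ (nseq (k + 1)) / μ (nseq k)) atTop (𝓝 1) := by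
  have hgap_nonneg (k : ℕ) : 0 ≤ 1 - μ (nseq (k + 1)) / μ (nseq k) :=
    sub_nonneg.2 ((div_le_one (hμpos _)).2 (hμ (hmono k.lt_succ_self)).le)
  have hgap : Tendsto (fun k => 1 - μ (nseq (k + 1)) / μ (nseq k)) atTop (𝓝 0) :=
    squeeze_zero hgap_nonneg (one_sub_div_le_lamMu_div hμ hμpos hmono)
      (h.comp hmono.tendsto_atTop)
  simpa using tendsto_const_nhds.sub hgap (a := (1 : ℝ))

lemma tendsto_lamMu_div_of_tendsto_div
    (h : Tendsto (fun k => μ (nseq (k + 1)) / μ (nseq k)) atTop (𝓝 1)) :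
    Tendsto (fun n => lamMu μ (Set.range nseq) n / μ n) atTop (𝓝 0) := by
  have hμ0 (n : ℕ) : 0 ≤ μ n := (hμpos n).le
  refine tendsto_order.2 ⟨fun ε hε => Eventually.of_forall fun n =>
    hε.trans_le (div_nonneg (lamMu_nonneg hμ.antitone hμ0) (hμ0 n)), fun ε hε => ?_⟩
  obtain ⟨c, hc, hc1⟩ := exists_between (max_lt zero_lt_one (sub_lt_self 1 hε))
  obtain ⟨K, hK⟩ := eventually_atTop.1 ((tendsto_order.1 h).1 c hc1)
  have hjump (j : ℕ) (hj : j ≥ K) : c * μ (nseq j) ≤ μ (nseq (j + 1)) :=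
    ((lt_div_iff₀ (hμpos _)).1 (hK j hj)).le
  refine eventually_atTop.2 ⟨nseq K, fun n hn => ?_⟩
  have hbound : lamMu μ (Set.range nseq) n ≤ (1 - c) * μ n :=
    lamMu_le_of_forall fun a b hna _ hE =>
      (sub_le_of_isHole_range hμ.antitone hmono (le_of_max_le_left hc.le) hjump
        (hn.trans hna) hE).trans
        (mul_le_mul_of_nonneg_left (hμ.antitone hna) (sub_nonneg.2 hc1.le))
  have hcε : 1 - c < ε := by linarith [(le_max_right 0 (1 - ε)).trans_lt hc]
  rw [div_lt_iff₀ (hμpos n)]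
  exact hbound.trans_lt (mul_lt_mul_of_pos_right hcε (hμpos n))

end RangeHoles

theorem nonporous_at_infinity_iff_general
    (μ : ℕ → ℝ) (hμanti : StrictAnti μ) (hμpos : ∀ n, 0 < μ n)
    (nseq : ℕ → ℕ) (hmono : StrictMono nseq) :
    upperPorosityInf μ (Set.range nseq) = 0 ↔
      Tendsto (fun k => μ (nseq (k + 1)) / μ (nseq k)) atTop (nhds 1) := by
  have hμ0 (n : ℕ) : 0 ≤ μ n := (hμpos n).le
  have hle_one (n : ℕ) : lamMu μ (Set.range nseq) n / μ n ≤ 1 :=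
    (div_le_one (hμpos n)).2 (lamMu_le_self hμanti.antitone hμ0)
  rw [upperPorosityInf, limsup_eq_zero_iff_tendsto
    (fun n => div_nonneg (lamMu_nonneg hμanti.antitone hμ0) (hμ0 n))
    (isBoundedUnder_of ⟨1, hle_one⟩)]
  exact ⟨tendsto_div_of_tendsto_lamMu_div hμanti hμpos hmono,
    tendsto_lamMu_div_of_tendsto_div hμanti hμpos hmono⟩

theorem nonporous_at_infinity_iff
    (μ : ℕ → ℝ) (hμanti : StrictAnti μ) (hμpos : ∀ n, 0 < μ n)
    (hμ0 : Tendsto μ atTop (nhds 0))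
    (nseq : ℕ → ℕ) (hmono : StrictMono nseq) :
    upperPorosityInf μ (Set.range nseq) = 0 ↔
      Tendsto (fun k => μ (nseq (k + 1)) / μ (nseq k)) atTop (nhds 1) :=
  nonporous_at_infinity_iff_general μ hμanti hμpos nseq hmono
end

section
/- Let A = {a_1, a_2, ...} ⊆ (0,∞) with a_k > a_{k+1} > 0 for all k and lim_{k→∞} a_{k+1}/a_k = 0. Then the right lower porosity of A at 0 equals 1/2: p̲(A) = 1/2. -/
/-!
Below `a k` every point of `A` is at most `a (k + 1)`, so for `a (k + 1) ≤ h ≤ a k` the two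
gaps `(a (k + 1), h)` and `(a (k + 2), a (k + 1))` give `2 λ(A, h) ≥ h - a (k + 2)`; as
`a (k + 2) / a (k + 1) → 0`, this is eventually at least `(1 - ε) h`. Conversely, at `h = 2 a k`
the point `a k` cuts `(0, h)` into two halves, so `λ(A, 2 a k) ≤ a k`, and `2 a k → 0`.
-/

open Filter Topology Set

/-- The length of the largest open subinterval of `(0, h)` containing no point of `E`. -/
noncomputable def lam (E : Set ℝ) (h : ℝ) : ℝ :=
  sSup {l : ℝ | ∃ a b : ℝ, 0 ≤ a ∧ a ≤ b ∧ b ≤ h ∧ Set.Ioo a b ∩ E = ∅ ∧ l = b - a}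

/-- The right lower porosity of `E ⊆ ℝ⁺` at `0`. -/
noncomputable def lowerPorosity (E : Set ℝ) : ℝ :=
  Filter.liminf (fun h => lam E h / h) (nhdsWithin 0 (Set.Ioi 0))

section Lam

variable {E : Set ℝ} {h : ℝ}

lemma lam_bddAbove :
    BddAbove {l : ℝ | ∃ a b : ℝ, 0 ≤ a ∧ a ≤ b ∧ b ≤ h ∧ Ioo a b ∩ E = ∅ ∧ l = b - a} := by
  refine ⟨h, ?_⟩
  rintro l ⟨x, y, hx, -, hyh, -, rfl⟩
  linarith

lemma le_lam {x y : ℝ} (hx : 0 ≤ x) (hxy : x ≤ y) (hyh : y ≤ h) (hE : Ioo x y ∩ E = ∅) :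
    y - x ≤ lam E h :=
  le_csSup lam_bddAbove ⟨x, y, hx, hxy, hyh, hE, rfl⟩

lemma lam_nonneg (hh : 0 ≤ h) : 0 ≤ lam E h := by
  simpa using le_lam (E := E) le_rfl le_rfl hh (by simp)

lemma lam_le (hh : 0 ≤ h) : lam E h ≤ h := by
  refine Real.sSup_le ?_ hh
  rintro l ⟨x, y, hx, -, hyh, -, rfl⟩
  linarith

lemma lam_le_max_of_mem {c : ℝ} (hc : c ∈ E) (hc₀ : 0 ≤ c) : lam E h ≤ max c (h - c) := by
  refine Real.sSup_le ?_ (le_max_of_le_left hc₀)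
  rintro l ⟨x, y, hx, -, hyh, hE, rfl⟩
  by_cases hyc : y ≤ c
  · exact le_max_of_le_left (by linarith)
  · have hcx : c ≤ x := by
      by_contra! hxc
      exact (Set.eq_empty_iff_forall_notMem.mp hE) c ⟨⟨hxc, not_le.mp hyc⟩, hc⟩
    exact le_max_of_le_right (by linarith)

lemma lam_div_self_mem_Icc (hh : 0 < h) : lam E h / h ∈ Icc 0 1 :=
  ⟨div_nonneg (lam_nonneg hh.le) hh.le, (div_le_one hh).mpr (lam_le hh.le)⟩

end Lam

section LowerPorosity

variable {E : Set ℝ} {c : ℝ}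

lemma lowerPorosity_le_of_frequently (hc : ∃ᶠ h in 𝓝[>] 0, lam E h / h ≤ c) :
    lowerPorosity E ≤ c :=
  liminf_le_of_frequently_le hc
    ⟨0, eventually_nhdsWithin_of_forall fun _ hh => (lam_div_self_mem_Icc hh).1⟩

lemma le_lowerPorosity_of_eventually (hc : ∀ ε > 0, ∀ᶠ h in 𝓝[>] 0, c - ε ≤ lam E h / h) :
    c ≤ lowerPorosity E := by
  have hbdd : IsBoundedUnder (· ≤ ·) (𝓝[>] (0 : ℝ)) fun h => lam E h / h :=
    ⟨1, eventually_nhdsWithin_of_forall fun _ hh => (lam_div_self_mem_Icc hh).2⟩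
  exact le_of_forall_sub_le fun ε hε => le_liminf_of_le hbdd.isCoboundedUnder_ge (hc ε hε)

end LowerPorosity

section Sequence

variable {a : ℕ → ℝ}

lemma tendsto_zero_of_tendsto_ratio_zero (hpos : ∀ k, 0 < a k)
    (hratio : Tendsto (fun k => a (k + 1) / a k) atTop (𝓝 0)) : Tendsto a atTop (𝓝 0) := by
  have habs : ∀ k, ‖a k‖ = a k := fun k => Real.norm_of_nonneg (hpos k).le
  refine (summable_of_ratio_test_tendsto_lt_one zero_lt_one
    (Eventually.of_forall fun k => (hpos k).ne') ?_).tendsto_atTop_zero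
  simpa only [habs] using hratio

lemma Antitone.exists_succ_lt_le (ha : Antitone a) (ha₀ : Tendsto a atTop (𝓝 0))
    {h : ℝ} (hh : 0 < h) {N : ℕ} (hN : h ≤ a N) : ∃ k ≥ N, a (k + 1) < h ∧ h ≤ a k := by
  classical
  have hex : ∃ m, a m < h := (ha₀.eventually (eventually_lt_nhds hh)).exists
  obtain ⟨k, hk⟩ : ∃ k, Nat.find hex = k + 1 := by
    refine Nat.exists_eq_add_one_of_ne_zero fun h0 => ?_
    exact (Nat.find_spec hex).not_ge (h0 ▸ hN.trans (ha (Nat.zero_le N)))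
  have hkN : N ≤ k := by
    by_contra! hkN
    exact (hk ▸ Nat.find_spec hex).not_ge (hN.trans (ha hkN))
  exact ⟨k, hkN, hk ▸ Nat.find_spec hex, not_lt.mp (Nat.find_min hex (by omega))⟩

lemma Antitone.Ioo_inter_range_eq_empty (ha : Antitone a) {k : ℕ} {x y : ℝ}
    (hx : a (k + 1) ≤ x) (hy : y ≤ a k) : Ioo x y ∩ range a = ∅ := by
  refine Set.eq_empty_iff_forall_notMem.mpr ?_
  rintro _ ⟨⟨hxj, hjy⟩, j, rfl⟩
  rcases le_or_gt j k with hjk | hkj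
  · exact (hjy.trans_le hy).not_ge (ha hjk)
  · exact (hx.trans_lt hxj).not_ge (ha (Nat.succ_le_of_lt hkj))

lemma Antitone.sub_le_two_mul_lam (ha : Antitone a) (hpos : ∀ k, 0 < a k) {k : ℕ} {h : ℝ}
    (hk₁ : a (k + 1) ≤ h) (hk : h ≤ a k) : h - a (k + 2) ≤ 2 * lam (range a) h := by
  have hgap₁ : h - a (k + 1) ≤ lam (range a) h :=
    le_lam (hpos _).le hk₁ le_rfl (ha.Ioo_inter_range_eq_empty le_rfl hk)
  have hgap₂ : a (k + 1) - a (k + 2) ≤ lam (range a) h :=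
    le_lam (hpos _).le (ha (Nat.le_succ _)) hk₁ (ha.Ioo_inter_range_eq_empty le_rfl le_rfl)
  linarith

lemma eventually_sub_le_lam_range_div (ha : Antitone a) (hpos : ∀ k, 0 < a k)
    (hratio : Tendsto (fun k => a (k + 1) / a k) atTop (𝓝 0)) {ε : ℝ} (hε : 0 < ε) :
    ∀ᶠ h in 𝓝[>] 0, 1 / 2 - ε ≤ lam (range a) h / h := by
  obtain ⟨N, hN⟩ := (hratio.eventually (gt_mem_nhds (mul_pos two_pos hε))).exists_forall_of_atTop
  filter_upwards [Ioc_mem_nhdsGT (hpos N)] with h ⟨hh, hhN⟩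
  obtain ⟨k, hkN, hk₁, hk⟩ :=
    ha.exists_succ_lt_le (tendsto_zero_of_tendsto_ratio_zero hpos hratio) hh hhN
  have hsmall : a (k + 2) < 2 * ε * h :=
    calc a (k + 2) < 2 * ε * a (k + 1) := (div_lt_iff₀ (hpos _)).mp (hN (k + 1) (by omega))
      _ ≤ 2 * ε * h := by gcongr
  rw [le_div_iff₀ hh]
  linarith [ha.sub_le_two_mul_lam hpos hk₁.le hk]

lemma frequently_lam_range_div_le (hpos : ∀ k, 0 < a k) (ha₀ : Tendsto a atTop (𝓝 0)) :
    ∃ᶠ h in 𝓝[>] 0, lam (range a) h / h ≤ 1 / 2 := by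
  have htwo : Tendsto (fun k => 2 * a k) atTop (𝓝[>] 0) :=
    tendsto_nhdsWithin_of_tendsto_nhds_of_eventually_within _
      (by simpa using ha₀.const_mul 2) (Eventually.of_forall fun k => by simp [hpos k])
  refine htwo.frequently (Frequently.of_forall fun k => ?_)
  have hlam : lam (range a) (2 * a k) ≤ a k := by
    simpa [two_mul] using lam_le_max_of_mem (h := 2 * a k) (mem_range_self k) (hpos k).le
  rw [div_le_iff₀ (by linarith [hpos k])]
  linarith

end Sequence

theorem lowerPorosity_of_fast_decreasing
    (a : ℕ → ℝ) (hpos : ∀ k, 0 < a k) (hanti : ∀ k, a (k + 1) < a k)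
    (hratio : Tendsto (fun k => a (k + 1) / a k) atTop (nhds 0)) :
    lowerPorosity (Set.range a) = 1 / 2 := by
  have ha : Antitone a := (strictAnti_nat_of_succ_lt hanti).antitone
  refine le_antisymm ?_ ?_
  · exact lowerPorosity_le_of_frequently
      (frequently_lam_range_div_le hpos (tendsto_zero_of_tendsto_ratio_zero hpos hratio))
  · exact le_lowerPorosity_of_eventually fun ε hε =>
      eventually_sub_le_lam_range_div ha hpos hratio hε
end
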